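/- arXiv:1405.3119 — 3 statements merged into one kernel-verified Lean document; each statement's English description precedes it below -/
import Mathlib

section
/- Let M be a matroid, let I be an independent set, and let X = {x_1, …, x_k} ⊆ I and Y = {y_1, …, y_k} ⊆ span(I) \ I be sets of size k such that span((I \ X) ∪ Y) = span(I). Suppose y_{k+1} ∈ span(I) \ I and x_{k+1} are such that x_{k+1} ∈ C_M(I, y_{k+1}) \ X and x_{k+1} ∉ C_M(I, y_i) for all i = 1, …, k. Then x_{k+1} ∈ C_M((I \ X) ∪ Y, y_{k+1}). -/
/-- `C` is the `M`-support of `x` in `I`: a minimal subset of `I` spanning `x`. -/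
def Matroid.IsSupport {α : Type*} (M : Matroid α) (I : Set α) (x : α) (C : Set α) : Prop :=
  Minimal (fun A => A ⊆ I ∧ x ∈ M.closure A) C

/-- A support is contained in any subset of an independent set spanning the element. -/
lemma IsSupport.subset_of_mem_closure {α : Type*} {M : Matroid α} {I C A : Set α} {y : α}
    (hI : M.Indep I) (hC : M.IsSupport I y C) (hA : A ⊆ I) (hyA : y ∈ M.closure A) :
    C ⊆ A := by
  have hCI : C ⊆ I := hC.1.1
  have hCA : M.Indep (C ∪ A) := hI.subset (Set.union_subset hCI hA)
  have hy : y ∈ M.closure (C ∩ A) := by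
    rw [hCA.closure_inter_eq_inter_closure]
    exact ⟨hC.1.2, hyA⟩
  have hmin := hC.2 ⟨Set.inter_subset_left.trans hCI, hy⟩ Set.inter_subset_left
  exact hmin.trans Set.inter_subset_right

/-- Lemma 3.5: Let `I` be independent in a matroid `M`, let
`X = {x 0, …, x (k-1)} ⊆ I` and `Y = {y 0, …, y (k-1)} ⊆ span(I) \ I` be such
that `span((I \ X) ∪ Y) = span(I)` (with `(I \ X) ∪ Y` independent).
If `yk ∈ span(I) \ I` and `xk` satisfy `xk ∈ C_M(I, yk) \ X` and
`xk ∉ C_M(I, y i)` for all `i`, then `xk ∈ C_M((I \ X) ∪ Y, yk)`. -/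
theorem mem_support_of_swap {α : Type*} (M : Matroid α) (I : Set α) (hI : M.Indep I)
    (k : ℕ) (x y : Fin k → α) (hxinj : Function.Injective x) (hyinj : Function.Injective y)
    (hxI : Set.range x ⊆ I) (hyI : Set.range y ⊆ M.closure I \ I)
    (hIXY : M.Indep ((I \ Set.range x) ∪ Set.range y))
    (hspan : M.closure ((I \ Set.range x) ∪ Set.range y) = M.closure I)
    (yk xk : α) (hyk : yk ∈ M.closure I \ I)
    (Ck : Set α) (hCk : M.IsSupport I yk Ck) (hxk : xk ∈ Ck \ Set.range x)
    (Cy : Fin k → Set α) (hCy : ∀ i : Fin k, M.IsSupport I (y i) (Cy i))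
    (hxknot : ∀ i : Fin k, xk ∉ Cy i)
    (C' : Set α) (hC' : M.IsSupport ((I \ Set.range x) ∪ Set.range y) yk C') :
    xk ∈ C' := by
  by_contra hxkC'
  have hIE : I ⊆ M.E := hI.subset_ground
  have hsub : C' ⊆ M.closure (I \ {xk}) := by
    intro a ha
    rcases hC'.1.1 ha with ⟨haI, _⟩ | haY
    · exact M.subset_closure (I \ {xk}) (Set.diff_subset.trans hIE)
        ⟨haI, fun h => hxkC' (h ▸ ha)⟩
    · obtain ⟨i, rfl⟩ := haY
      have hCyi : Cy i ⊆ I \ {xk} :=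
        fun b hb => ⟨(hCy i).1.1 hb, fun h => hxknot i (h ▸ hb)⟩
      exact M.closure_subset_closure hCyi ((hCy i).1.2)
  have hyk2 : yk ∈ M.closure (I \ {xk}) := by
    have h1 := M.closure_subset_closure_of_subset_closure hsub
    exact h1 hC'.1.2
  have hCksub : Ck ⊆ I \ {xk} :=
    IsSupport.subset_of_mem_closure hI hCk Set.diff_subset hyk2
  exact (hCksub hxk.1).2 rfl
end

section
/- Every Latin square of order n possesses a partial transversal of size at least n − √n, i.e., a set of at least n − √n cells, no two of which lie in the same row, no two in the same column, and no two containing the same symbol. -/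
open Finset

namespace Woolbright

attribute [local instance] Classical.propDecidable

variable {n : ℕ}

/-- A configuration: a permutation (the diagonal) together with a choice of
representative rows for the symbols. -/
abbrev Cfg (n : ℕ) := Equiv.Perm (Fin n) × (Fin n → Fin n)

/-- `rep` picks, for each present symbol, a row of the diagonal carrying it. -/
def Good (L : Fin n → Fin n → Fin n) (P : Finset (Fin n)) (c : Cfg n) : Prop :=
  ∀ s ∈ P, L (c.2 s) (c.1 (c.2 s)) = s

theorem Good.inj {L : Fin n → Fin n → Fin n} {P : Finset (Fin n)} {c : Cfg n}
    (h : Good L P c) {a b : Fin n} (ha : a ∈ P) (hb : b ∈ P) (hab : c.2 a = c.2 b) :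
    a = b := by
  have h1 := h a ha
  have h2 := h b hb
  rw [hab] at h1
  exact h1.symm.trans h2

/-- Swap-reachability of configurations, avoiding transitions led by rows in `A`. -/
inductive Reach (L : Fin n → Fin n → Fin n) (P : Finset (Fin n)) (c₀ : Cfg n)
    (A : Finset (Fin n)) : Cfg n → Prop
  | base : Reach L P c₀ A c₀
  | step {c : Cfg n} (i j : Fin n) (hc : Reach L P c₀ A c)
      (hi : i ∉ P.image c.2) (hj : j ∉ P.image c.2) (hij : i ≠ j) (hiA : i ∉ A) :
      Reach L P c₀ A (c.1 * Equiv.swap i j, Function.update c.2 (L i (c.1 j)) i)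

/-- Key exchange lemma: an entry in the redundant subarray must be a present symbol. -/
theorem entry_mem {L : Fin n → Fin n → Fin n} {P : Finset (Fin n)}
    (hmax : ∀ σ : Equiv.Perm (Fin n), (univ.image fun r => L r (σ r)).card ≤ P.card)
    {c : Cfg n} (hG : Good L P c) {i j : Fin n}
    (hi : i ∉ P.image c.2) (hj : j ∉ P.image c.2) (hij : i ≠ j) :
    L i (c.1 j) ∈ P := by
  by_contra hf
  have hsub : insert (L i (c.1 j)) P ⊆ univ.image fun r => L r ((c.1 * Equiv.swap i j) r) := by
    intro s hs
    rcases mem_insert.mp hs with rfl | hsP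
    · refine mem_image.mpr ⟨i, mem_univ _, ?_⟩
      rw [Equiv.Perm.mul_apply, Equiv.swap_apply_left]
    · refine mem_image.mpr ⟨c.2 s, mem_univ _, ?_⟩
      have hri : c.2 s ≠ i := fun h => hi (h ▸ mem_image_of_mem c.2 hsP)
      have hrj : c.2 s ≠ j := fun h => hj (h ▸ mem_image_of_mem c.2 hsP)
      rw [Equiv.Perm.mul_apply, Equiv.swap_apply_of_ne_of_ne hri hrj]
      exact hG s hsP
  have h1 := card_le_card hsub
  rw [card_insert_of_notMem hf] at h1
  have h2 := hmax (c.1 * Equiv.swap i j)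
  omega

theorem Reach.good {L : Fin n → Fin n → Fin n} {P : Finset (Fin n)} {c₀ : Cfg n}
    {A c} (hG₀ : Good L P c₀) (h : Reach L P c₀ A c) : Good L P c := by
  induction h with
  | base => exact hG₀
  | @step c i j hc hi hj hij hiA ih =>
      intro w hw
      by_cases hws : w = L i (c.1 j)
      · subst hws
        dsimp only
        rw [Function.update_self, Equiv.Perm.mul_apply, Equiv.swap_apply_left]
      · dsimp only
        rw [Function.update_of_ne hws, Equiv.Perm.mul_apply,
          Equiv.swap_apply_of_ne_of_ne
            (fun h' => hi (mem_image.mpr ⟨w, hw, h'⟩))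
            (fun h' => hj (mem_image.mpr ⟨w, hw, h'⟩))]
        exact ih w hw

theorem Reach.mono {L : Fin n → Fin n → Fin n} {P : Finset (Fin n)} {c₀ : Cfg n}
    {A A' c} (hAA : A ⊆ A') (h : Reach L P c₀ A' c) : Reach L P c₀ A c := by
  induction h with
  | base => exact Reach.base
  | @step c i j hc hi hj hij hiA ih =>
      exact Reach.step i j ih hi hj hij (fun hx => hiA (hAA hx))

theorem Reach.stayRed {L : Fin n → Fin n → Fin n} {P : Finset (Fin n)} {c₀ : Cfg n}
    {A c} {x : Fin n} (hx : x ∈ A) (hA : x ∉ P.image c₀.2)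
    (h : Reach L P c₀ A c) : x ∉ P.image c.2 := by
  induction h with
  | base => exact hA
  | @step c i j hc hi hj hij hiA ih =>
      intro hmem
      obtain ⟨w, hw, hwx⟩ := mem_image.mp hmem
      dsimp only at hwx
      by_cases hws : w = L i (c.1 j)
      · subst hws
        rw [Function.update_self] at hwx
        exact hiA (by rwa [hwx])
      · rw [Function.update_of_ne hws] at hwx
        exact ih (mem_image.mpr ⟨w, hw, hwx⟩)


section Main

variable (L : Fin n → Fin n → Fin n) (P : Finset (Fin n))
  (σ₀ : Equiv.Perm (Fin n)) (rep₀ : Fin n → Fin n)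

/-- Rows to avoid when protecting row `x` (all redundant rows `≤ x`). -/
noncomputable def Avoid (x : Fin n) : Finset (Fin n) :=
  (univ \ P.image rep₀).filter (fun z => z ≤ x)

/-- Columns seen paired with row `x` across reachable configurations. -/
noncomputable def Vset (x : Fin n) : Finset (Fin n) :=
  univ.filter (fun col => ∃ c : Cfg n, Reach L P (σ₀, rep₀) (Avoid P rep₀ x) c ∧
    ∃ i, i ∉ P.image c.2 ∧ i ≠ x ∧ c.1 i = col)

/-- Symbols on which a transition is possible in the `x`-protecting world. -/
noncomputable def Tset (x : Fin n) : Finset (Fin n) :=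
  univ.filter (fun s => ∃ c : Cfg n, Reach L P (σ₀, rep₀) (Avoid P rep₀ x) c ∧
    ∃ i j : Fin n, i ∉ P.image c.2 ∧ j ∉ P.image c.2 ∧ i ≠ j ∧ i ∉ Avoid P rep₀ x ∧
      L i (c.1 j) = s)

noncomputable def Dset (x : Fin n) : Finset (Fin n) :=
  (Vset L P σ₀ rep₀ x).image (fun col => L x col) \ Tset L P σ₀ rep₀ x

variable {L P σ₀ rep₀}

theorem mini (hG₀ : Good L P (σ₀, rep₀)) {x : Fin n} (hxK : x ∉ P.image rep₀)
    {c : Cfg n} (hc : Reach L P (σ₀, rep₀) (Avoid P rep₀ x) c) {i j : Fin n}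
    (hi : i ∉ P.image c.2) (hj : j ∉ P.image c.2) (hij : i ≠ j)
    (hiA : i ∉ Avoid P rep₀ x)
    (hsP : L i (c.1 j) ∈ P)
    (h1 : c.2 (L i (c.1 j)) = rep₀ (L i (c.1 j)))
    (h2 : c.1 (rep₀ (L i (c.1 j))) = σ₀ (rep₀ (L i (c.1 j)))) :
    σ₀ (rep₀ (L i (c.1 j))) ∈ Vset L P σ₀ rep₀ x := by
  have hGc : Good L P c := hc.good hG₀
  have hxA : x ∈ Avoid P rep₀ x :=
    mem_filter.mpr ⟨mem_sdiff.mpr ⟨mem_univ _, hxK⟩, le_refl x⟩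
  have hxred : x ∉ P.image c.2 := hc.stayRed hxA (by simpa using hxK)
  set s := L i (c.1 j) with hs
  set r₀ := rep₀ s with hr₀
  have hmemr : c.2 s ∈ P.image c.2 := mem_image_of_mem c.2 hsP
  have hri : r₀ ≠ i := by
    intro h
    exact hi (h ▸ h1 ▸ hmemr)
  have hrj : r₀ ≠ j := by
    intro h
    exact hj (h ▸ h1 ▸ hmemr)
  have hrx : r₀ ≠ x := by
    intro h
    exact hxred (h ▸ h1 ▸ hmemr)
  refine mem_filter.mpr ⟨mem_univ _, ⟨(c.1 * Equiv.swap i j, Function.update c.2 s i),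
    Reach.step i j hc hi hj hij hiA, r₀, ?_, hrx, ?_⟩⟩
  · -- r₀ is redundant in the stepped configuration
    intro hmem
    obtain ⟨w, hw, hwx⟩ := mem_image.mp hmem
    dsimp only at hwx
    by_cases hws : w = s
    · subst hws
      rw [Function.update_self] at hwx
      exact hri hwx.symm
    · rw [Function.update_of_ne hws] at hwx
      have : c.2 w = c.2 s := by rw [hwx, ← h1]
      exact hws (hGc.inj hw hsP this)
  · -- the stepped diagonal still has σ₀'s column at r₀
    show (c.1 * Equiv.swap i j) r₀ = σ₀ r₀
    rw [Equiv.Perm.mul_apply, Equiv.swap_apply_of_ne_of_ne hri hrj]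
    exact h2

theorem core (hG₀ : Good L P (σ₀, rep₀)) {x : Fin n} (hxK : x ∉ P.image rep₀)
    {c : Cfg n} (hc : Reach L P (σ₀, rep₀) (Avoid P rep₀ x) c) :
    ∀ s ∈ P, (c.2 s = rep₀ s ∧ c.1 (rep₀ s) = σ₀ (rep₀ s)) ∨
      σ₀ (rep₀ s) ∈ Vset L P σ₀ rep₀ x := by
  induction hc with
  | base => exact fun s _ => Or.inl ⟨rfl, rfl⟩
  | @step c i j hc hi hj hij hiA ih =>
      intro s hs
      rcases ih s hs with ⟨h1, h2⟩ | hV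
      · by_cases hws : s = L i (c.1 j)
        · subst hws
          exact Or.inr (mini hG₀ hxK hc hi hj hij hiA hs h1 h2)
        · left
          constructor
          · show Function.update c.2 (L i (c.1 j)) i s = rep₀ s
            rw [Function.update_of_ne hws]; exact h1
          · show (c.1 * Equiv.swap i j) (rep₀ s) = σ₀ (rep₀ s)
            have hmem : c.2 s ∈ P.image c.2 := mem_image_of_mem c.2 hs
            rw [Equiv.Perm.mul_apply, Equiv.swap_apply_of_ne_of_ne
              (fun h => hi (mem_image.mpr ⟨s, hs, h1.trans h⟩))
              (fun h => hj (mem_image.mpr ⟨s, hs, h1.trans h⟩))]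
            exact h2
      · exact Or.inr hV

theorem Tset_subset_P
    (hmax : ∀ σ : Equiv.Perm (Fin n), (univ.image fun r => L r (σ r)).card ≤ P.card)
    (hG₀ : Good L P (σ₀, rep₀)) {x : Fin n} :
    Tset L P σ₀ rep₀ x ⊆ P := by
  intro s hsT
  obtain ⟨-, c, hc, i, j, hi, hj, hij, hiA, hL⟩ := mem_filter.mp hsT
  exact hL ▸ entry_mem hmax (hc.good hG₀) hi hj hij

theorem TtoV
    (hmax : ∀ σ : Equiv.Perm (Fin n), (univ.image fun r => L r (σ r)).card ≤ P.card)
    (hG₀ : Good L P (σ₀, rep₀)) {x : Fin n} (hxK : x ∉ P.image rep₀) :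
    ∀ s ∈ Tset L P σ₀ rep₀ x, σ₀ (rep₀ s) ∈ Vset L P σ₀ rep₀ x := by
  intro s hsT
  obtain ⟨-, c, hc, i, j, hi, hj, hij, hiA, hL⟩ := mem_filter.mp hsT
  have hsP : s ∈ P := hL ▸ entry_mem hmax (hc.good hG₀) hi hj hij
  rcases core hG₀ hxK hc s hsP with ⟨h1, h2⟩ | hV
  · subst hL
    exact mini hG₀ hxK hc hi hj hij hiA hsP h1 h2
  · exact hV

theorem cardV
    (hmax : ∀ σ : Equiv.Perm (Fin n), (univ.image fun r => L r (σ r)).card ≤ P.card)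
    (hG₀ : Good L P (σ₀, rep₀)) {x : Fin n} (hxK : x ∈ univ \ P.image rep₀) :
    (univ \ P.image rep₀).card - 1 + (Tset L P σ₀ rep₀ x).card
      ≤ (Vset L P σ₀ rep₀ x).card := by
  have hxK' : x ∉ P.image rep₀ := (mem_sdiff.mp hxK).2
  set U₁ : Finset (Fin n) := ((univ \ P.image rep₀).erase x).image σ₀ with hU₁
  set U₂ : Finset (Fin n) := (Tset L P σ₀ rep₀ x).image (fun s => σ₀ (rep₀ s)) with hU₂
  have hU₁V : U₁ ⊆ Vset L P σ₀ rep₀ x := by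
    intro col hcol
    obtain ⟨i, hi, rfl⟩ := mem_image.mp hcol
    have hi1 := mem_erase.mp hi
    refine mem_filter.mpr ⟨mem_univ _, ⟨(σ₀, rep₀), Reach.base, i, ?_, hi1.1, rfl⟩⟩
    exact (mem_sdiff.mp hi1.2).2
  have hU₂V : U₂ ⊆ Vset L P σ₀ rep₀ x := by
    intro col hcol
    obtain ⟨s, hs, rfl⟩ := mem_image.mp hcol
    exact TtoV hmax hG₀ hxK' s hs
  have hdisj : Disjoint U₁ U₂ := by
    rw [disjoint_left]
    intro col h1 h2
    obtain ⟨i, hi, rfl⟩ := mem_image.mp h1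
    obtain ⟨s, hs, hcol⟩ := mem_image.mp h2
    have : i = rep₀ s := σ₀.injective hcol.symm
    have hsP : s ∈ P := Tset_subset_P hmax hG₀ hs
    have : i ∈ P.image rep₀ := this ▸ mem_image_of_mem rep₀ hsP
    exact (mem_sdiff.mp (mem_erase.mp hi).2).2 this
  have hcard1 : U₁.card = (univ \ P.image rep₀).card - 1 := by
    rw [hU₁, card_image_of_injective _ σ₀.injective, card_erase_of_mem hxK]
  have hcard2 : U₂.card = (Tset L P σ₀ rep₀ x).card := by
    rw [hU₂]
    apply card_image_of_injOn
    intro a ha b hb hab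
    exact hG₀.inj (Tset_subset_P hmax hG₀ ha) (Tset_subset_P hmax hG₀ hb)
      (σ₀.injective hab)
  calc (univ \ P.image rep₀).card - 1 + (Tset L P σ₀ rep₀ x).card
      = (U₁ ∪ U₂).card := by rw [card_union_of_disjoint hdisj, hcard1, hcard2]
    _ ≤ (Vset L P σ₀ rep₀ x).card := card_le_card (union_subset hU₁V hU₂V)

theorem cardD (hrow : ∀ i, Function.Injective (L i))
    (hmax : ∀ σ : Equiv.Perm (Fin n), (univ.image fun r => L r (σ r)).card ≤ P.card)
    (hG₀ : Good L P (σ₀, rep₀)) {x : Fin n} (hxK : x ∈ univ \ P.image rep₀) :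
    (univ \ P.image rep₀).card - 1 ≤ (Dset L P σ₀ rep₀ x).card := by
  have h1 := cardV hmax hG₀ hxK
  have h2 : ((Vset L P σ₀ rep₀ x).image (fun col => L x col)).card
      = (Vset L P σ₀ rep₀ x).card := card_image_of_injective _ (hrow x)
  have h3 := le_card_sdiff (Tset L P σ₀ rep₀ x) ((Vset L P σ₀ rep₀ x).image (fun col => L x col))
  rw [h2] at h3
  unfold Dset
  omega

theorem Dset_subset_P
    (hmax : ∀ σ : Equiv.Perm (Fin n), (univ.image fun r => L r (σ r)).card ≤ P.card)
    (hG₀ : Good L P (σ₀, rep₀)) {x : Fin n} (hxK : x ∈ univ \ P.image rep₀) :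
    Dset L P σ₀ rep₀ x ⊆ P := by
  intro s hsD
  obtain ⟨hsI, -⟩ := mem_sdiff.mp hsD
  obtain ⟨col, hcol, rfl⟩ := mem_image.mp hsI
  obtain ⟨-, c, hc, i, hi, hix, rfl⟩ := mem_filter.mp hcol
  have hxA : x ∈ Avoid P rep₀ x :=
    mem_filter.mpr ⟨hxK, le_refl x⟩
  have hxred : x ∉ P.image c.2 := hc.stayRed hxA (by simpa using (mem_sdiff.mp hxK).2)
  exact entry_mem hmax (hc.good hG₀) hxred hi (fun h => hix h.symm)

theorem Dset_disj
    (hG₀ : Good L P (σ₀, rep₀)) {x y : Fin n}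
    (hxK : x ∈ univ \ P.image rep₀) (hyK : y ∈ univ \ P.image rep₀) (hxy : x < y) :
    ∀ s ∈ Dset L P σ₀ rep₀ y, s ∉ Dset L P σ₀ rep₀ x := by
  intro s hsDy hsDx
  obtain ⟨hsIy, -⟩ := mem_sdiff.mp hsDy
  obtain ⟨-, hsT⟩ := mem_sdiff.mp hsDx
  obtain ⟨col, hcol, rfl⟩ := mem_image.mp hsIy
  obtain ⟨-, c, hc, i, hi, hiy, rfl⟩ := mem_filter.mp hcol
  apply hsT
  have hAA : Avoid P rep₀ x ⊆ Avoid P rep₀ y := by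
    intro z hz
    have hz' := mem_filter.mp hz
    exact mem_filter.mpr ⟨hz'.1, hz'.2.trans hxy.le⟩
  have hcx : Reach L P (σ₀, rep₀) (Avoid P rep₀ x) c := hc.mono hAA
  have hyA : y ∈ Avoid P rep₀ y := mem_filter.mpr ⟨hyK, le_refl y⟩
  have hyred : y ∉ P.image c.2 := hc.stayRed hyA (by simpa using (mem_sdiff.mp hyK).2)
  refine mem_filter.mpr ⟨mem_univ _, ⟨c, hcx, y, i, hyred, hi, fun h => hiy h.symm, ?_, rfl⟩⟩
  intro hmem
  have := (mem_filter.mp hmem).2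
  exact absurd this (not_le.mpr hxy)

theorem key (L : Fin n → Fin n → Fin n) (hrow : ∀ i, Function.Injective (L i)) :
    ∃ (P : Finset (Fin n)) (σ₀ : Equiv.Perm (Fin n)) (rep₀ : Fin n → Fin n),
      Good L P (σ₀, rep₀) ∧ P.card ≤ n ∧ (n - P.card) * (n - P.card) ≤ n := by
  classical
  obtain ⟨σ₀, -, hmax0⟩ := exists_max_image (univ : Finset (Equiv.Perm (Fin n)))
    (fun σ => (univ.image fun r => L r (σ r)).card) univ_nonempty
  set P := univ.image (fun r => L r (σ₀ r)) with hPdef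
  have hmax : ∀ σ : Equiv.Perm (Fin n), (univ.image fun r => L r (σ r)).card ≤ P.card :=
    fun σ => hmax0 σ (mem_univ σ)
  have hrep : ∀ s ∈ P, ∃ r, L r (σ₀ r) = s := by
    intro s hs
    obtain ⟨r, -, hr⟩ := mem_image.mp hs
    exact ⟨r, hr⟩
  choose! rep₀ hrep₀ using hrep
  have hG₀ : Good L P (σ₀, rep₀) := hrep₀
  have hPn : P.card ≤ n := by
    have := card_le_card (subset_univ P)
    simpa using this
  refine ⟨P, σ₀, rep₀, hG₀, hPn, ?_⟩
  have himg : (P.image rep₀).card = P.card :=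
    card_image_of_injOn (fun a ha b hb h => hG₀.inj ha hb h)
  have hkcard : (univ \ P.image rep₀).card = n - P.card := by
    rw [card_sdiff_of_subset (subset_univ _), himg, card_univ, Fintype.card_fin]
  set k := n - P.card with hk
  -- the main counting: k * (k - 1) ≤ P.card
  have hdisj : ∀ x ∈ univ \ P.image rep₀, ∀ y ∈ univ \ P.image rep₀, x ≠ y →
      Disjoint (Dset L P σ₀ rep₀ x) (Dset L P σ₀ rep₀ y) := by
    intro x hx y hy hne
    rcases lt_or_gt_of_ne hne with h | h
    · exact disjoint_left.mpr (fun a hax hay => Dset_disj hG₀ hx hy h a hay hax)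
    · exact disjoint_left.mpr (fun a hax hay => Dset_disj hG₀ hy hx h a hax hay)
  have h1 : ((univ \ P.image rep₀).biUnion (Dset L P σ₀ rep₀)).card ≤ P.card := by
    apply card_le_card
    intro s hs
    obtain ⟨x, hx, hsx⟩ := mem_biUnion.mp hs
    exact Dset_subset_P hmax hG₀ hx hsx
  rw [card_biUnion hdisj] at h1
  have h2 : ∀ x ∈ univ \ P.image rep₀, k - 1 ≤ (Dset L P σ₀ rep₀ x).card := by
    intro x hx
    have := cardD hrow hmax hG₀ hx
    rwa [hkcard] at this
  have h3 : k * (k - 1) ≤ ∑ x ∈ univ \ P.image rep₀, (Dset L P σ₀ rep₀ x).card := by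
    calc k * (k - 1) = ∑ _x ∈ univ \ P.image rep₀, (k - 1) := by
          rw [sum_const, smul_eq_mul, hkcard]
      _ ≤ _ := sum_le_sum h2
  have hfinal : k * (k - 1) ≤ P.card := h3.trans h1
  -- conclude k * k ≤ n
  have hkn : P.card + k = n := by omega
  rcases Nat.eq_zero_or_pos k with h0 | hpos
  · rw [h0]; omega
  · have : k * k = k * (k - 1) + k := by
      cases k with
      | zero => omega
      | succ m => simp [Nat.succ_sub_one]; ring
    omega

end Main

end Woolbright

/-- Every Latin square of order `n` (an `n × n` array over `n` symbols in which
every symbol occurs exactly once in each row and each column) has a partial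
transversal of size at least `n - √n`: a set of cells in pairwise distinct rows
and pairwise distinct columns, containing pairwise distinct symbols. -/
theorem latin_square_partial_transversal (n : ℕ) (L : Fin n → Fin n → Fin n)
    (hrow : ∀ i : Fin n, Function.Injective (L i))
    (hcol : ∀ j : Fin n, Function.Injective (fun i => L i j)) :
    ∃ T : Finset (Fin n × Fin n),
      Set.InjOn (fun p : Fin n × Fin n => p.1) (T : Set (Fin n × Fin n)) ∧
      Set.InjOn (fun p : Fin n × Fin n => p.2) (T : Set (Fin n × Fin n)) ∧
      Set.InjOn (fun p : Fin n × Fin n => L p.1 p.2) (T : Set (Fin n × Fin n)) ∧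
      (n : ℝ) - Real.sqrt n ≤ T.card := by
  classical
  obtain ⟨P, σ₀, rep₀, hG₀, hPn, hk2⟩ := Woolbright.key L hrow
  refine ⟨P.image (fun s => (rep₀ s, σ₀ (rep₀ s))), ?_, ?_, ?_, ?_⟩
  · intro p hp q hq h
    obtain ⟨a, ha, rfl⟩ := Finset.mem_image.mp (Finset.mem_coe.mp hp)
    obtain ⟨b, hb, rfl⟩ := Finset.mem_image.mp (Finset.mem_coe.mp hq)
    simp only at h
    rw [hG₀.inj ha hb h]
  · intro p hp q hq h
    obtain ⟨a, ha, rfl⟩ := Finset.mem_image.mp (Finset.mem_coe.mp hp)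
    obtain ⟨b, hb, rfl⟩ := Finset.mem_image.mp (Finset.mem_coe.mp hq)
    simp only at h
    rw [hG₀.inj ha hb (σ₀.injective h)]
  · intro p hp q hq h
    obtain ⟨a, ha, rfl⟩ := Finset.mem_image.mp (Finset.mem_coe.mp hp)
    obtain ⟨b, hb, rfl⟩ := Finset.mem_image.mp (Finset.mem_coe.mp hq)
    simp only at h
    rw [hG₀ a ha, hG₀ b hb] at h
    rw [h]
  · have hcard : (P.image (fun s => (rep₀ s, σ₀ (rep₀ s)))).card = P.card := by
      apply Finset.card_image_of_injOn
      intro a ha b hb h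
      exact hG₀.inj ha hb (congrArg Prod.fst h)
    rw [hcard]
    have h3 : ((n - P.card : ℕ) : ℝ) ^ 2 ≤ (n : ℝ) := by
      rw [sq]
      exact_mod_cast hk2
    have h4 : ((n - P.card : ℕ) : ℝ) ≤ Real.sqrt n := by
      calc ((n - P.card : ℕ) : ℝ) = Real.sqrt (((n - P.card : ℕ) : ℝ) ^ 2) :=
            (Real.sqrt_sq (by positivity)).symm
        _ ≤ Real.sqrt n := Real.sqrt_le_sqrt h3
    have h5 : ((n - P.card : ℕ) : ℝ) = (n : ℝ) - (P.card : ℝ) := by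
      rw [Nat.cast_sub hPn]
    linarith
end

section
/- Let M be a matroid of rank n on a ground set S, and let A be a row Matroidal Latin Square of degree n over M, that is, an n × n matrix with entries in S such that each row of A is a basis of M. Then A has an independent partial transversal of size at least n − √n, i.e., a set of at least n − √n entries of A, no two in the same row, no two in the same column, whose set of values is independent in M. -/
namespace RowMLS
open Finset Set

variable {α : Type*} {n : ℕ}

def mval (A : Fin n → Fin n → α) (p : Fin n × Fin n) : α := A p.1 p.2

def IsPT (M : Matroid α) (A : Fin n → Fin n → α) (T : Finset (Fin n × Fin n)) : Prop :=
  Set.InjOn Prod.fst (T : Set (Fin n × Fin n)) ∧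
  Set.InjOn Prod.snd (T : Set (Fin n × Fin n)) ∧
  M.Indep (mval A '' (T : Set (Fin n × Fin n)))

def freeC (T : Finset (Fin n × Fin n)) : Finset (Fin n) :=
  Finset.univ \ T.image Prod.snd

def cellsIn (T : Finset (Fin n × Fin n)) (X : Finset (Fin n)) : Finset (Fin n × Fin n) :=
  T.filter (fun p => p.2 ∈ X)

def VK (A : Fin n → Fin n → α) (T : Finset (Fin n × Fin n)) (X : Finset (Fin n)) : Set α :=
  mval A '' (cellsIn T X : Set (Fin n × Fin n))

variable {M : Matroid α} {A : Fin n → Fin n → α} {t : ℕ}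

lemma forced (hinj : Function.Injective (mval A)) (hrows : ∀ i : Fin n, M.IsBase (Set.range (A i)))
    (hmax : ∀ T' : Finset (Fin n × Fin n), IsPT M A T' → T'.card ≤ t)
    {T : Finset (Fin n × Fin n)} (hT : IsPT M A T) (hcard : T.card = t)
    {r c : Fin n} (hr : r ∉ T.image Prod.fst) (hc : c ∉ T.image Prod.snd) :
    A r c ∈ M.closure (mval A '' (T : Set (Fin n × Fin n))) := by
  by_contra h
  have heE : A r c ∈ M.E := (hrows r).subset_ground ⟨c, rfl⟩
  have hpT : (r, c) ∉ T := fun hm => hr (Finset.mem_image_of_mem Prod.fst hm)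
  have heV : A r c ∉ mval A '' (T : Set (Fin n × Fin n)) := by
    rintro ⟨p, hp, hpe⟩
    have : p = (r, c) := hinj hpe
    rw [this] at hp
    exact hpT hp
  have hind : M.Indep (insert (A r c) (mval A '' (T : Set (Fin n × Fin n)))) := by
    rw [hT.2.2.insert_indep_iff_of_notMem heV]
    exact ⟨heE, h⟩
  set T' : Finset (Fin n × Fin n) := insert (r, c) T with hT'
  have hcoe : (T' : Set (Fin n × Fin n)) = insert (r, c) (T : Set (Fin n × Fin n)) := by
    simp [hT']
  have hPT' : IsPT M A T' := by
    refine ⟨?_, ?_, ?_⟩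
    · rw [hcoe]
      intro a ha b hb hab
      rcases ha with ha | ha <;> rcases hb with hb | hb
      · rw [ha, hb]
      · exfalso; apply hr
        have hm : b.1 ∈ T.image Prod.fst := Finset.mem_image_of_mem Prod.fst hb
        rw [ha] at hab; simpa [← hab] using hm
      · exfalso; apply hr
        have hm : a.1 ∈ T.image Prod.fst := Finset.mem_image_of_mem Prod.fst ha
        rw [hb] at hab; simpa [hab] using hm
      · exact hT.1 ha hb hab
    · rw [hcoe]
      intro a ha b hb hab
      rcases ha with ha | ha <;> rcases hb with hb | hb
      · rw [ha, hb]
      · exfalso; apply hc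
        have hm : b.2 ∈ T.image Prod.snd := Finset.mem_image_of_mem Prod.snd hb
        rw [ha] at hab; simpa [← hab] using hm
      · exfalso; apply hc
        have hm : a.2 ∈ T.image Prod.snd := Finset.mem_image_of_mem Prod.snd ha
        rw [hb] at hab; simpa [hab] using hm
      · exact hT.2.1 ha hb hab
    · rw [hcoe, Set.image_insert_eq]
      exact hind
  have := hmax T' hPT'
  rw [hT', Finset.card_insert_of_notMem hpT, hcard] at this
  omega

lemma snd_injOn_cellsIn {T : Finset (Fin n × Fin n)} (hT : IsPT M A T) (X : Finset (Fin n)) :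
    Set.InjOn Prod.snd ((cellsIn T X : Finset (Fin n × Fin n)) : Set (Fin n × Fin n)) := by
  intro a ha b hb hab
  have h : (cellsIn T X : Set (Fin n × Fin n)) ⊆ (T : Set (Fin n × Fin n)) := by
    intro p hp
    simp only [cellsIn, Finset.coe_filter, Set.mem_setOf_eq] at hp
    exact hp.1
  exact hT.2.1 (h ha) (h hb) hab

lemma cellsIn_card {T : Finset (Fin n × Fin n)} (hT : IsPT M A T) {X : Finset (Fin n)}
    (hX : freeC T ⊆ X) : (cellsIn T X).card + (freeC T).card = X.card := by
  classical
  have h1 : (cellsIn T X).image Prod.snd = X ∩ T.image Prod.snd := by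
    ext c
    simp only [Finset.mem_image, Finset.mem_inter, cellsIn, Finset.mem_filter]
    constructor
    · rintro ⟨p, ⟨hpT, hpX⟩, rfl⟩
      exact ⟨hpX, ⟨p, hpT, rfl⟩⟩
    · rintro ⟨hcX, ⟨p, hpT, rfl⟩⟩
      exact ⟨p, ⟨hpT, hcX⟩, rfl⟩
  have h2 : (cellsIn T X).card = ((cellsIn T X).image Prod.snd).card :=
    (Finset.card_image_of_injOn (snd_injOn_cellsIn hT X)).symm
  have h3 : X \ T.image Prod.snd = freeC T := by
    apply Finset.Subset.antisymm
    · intro c hcmem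
      rw [Finset.mem_sdiff] at hcmem
      simp [freeC, hcmem.2]
    · intro c hcmem
      rw [Finset.mem_sdiff]
      simp only [freeC, Finset.mem_sdiff, Finset.mem_univ, true_and] at hcmem
      exact ⟨hX (by simp [freeC, hcmem]), hcmem⟩
  have h4 : (X ∩ T.image Prod.snd).card + (X \ T.image Prod.snd).card = X.card :=
    Finset.card_inter_add_card_sdiff X (T.image Prod.snd)
  rw [h2, h1, ← h3]
  exact h4

lemma freeC_card {T : Finset (Fin n × Fin n)} (hT : IsPT M A T) (hcard : T.card = t) :
    (freeC T).card = n - t := by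
  have h : (T.image Prod.snd).card = t := by
    rw [Finset.card_image_of_injOn hT.2.1, hcard]
  simp only [freeC]
  rw [Finset.card_sdiff_of_subset (Finset.subset_univ _), h, Finset.card_univ, Fintype.card_fin]

lemma VK_encard {T : Finset (Fin n × Fin n)} (hinj : Function.Injective (mval A))
    (X : Finset (Fin n)) : (VK A T X).encard = (cellsIn T X).card := by
  rw [VK, Set.InjOn.encard_image (hinj.injOn), Set.encard_coe_eq_coe_finsetCard]


lemma VK_mono (A : Fin n → Fin n → α) (T : Finset (Fin n × Fin n)) {X Y : Finset (Fin n)}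
    (h : X ⊆ Y) : VK A T X ⊆ VK A T Y := by
  apply Set.image_mono
  intro p hp
  simp only [cellsIn, Finset.coe_filter, Set.mem_setOf_eq] at hp ⊢
  exact ⟨hp.1, h hp.2⟩

lemma VK_subset_values (A : Fin n → Fin n → α) (T : Finset (Fin n × Fin n)) (X : Finset (Fin n)) :
    VK A T X ⊆ mval A '' (T : Set (Fin n × Fin n)) := by
  apply Set.image_mono
  intro p hp
  simp only [cellsIn, Finset.coe_filter, Set.mem_setOf_eq] at hp
  exact hp.1

lemma VK_univ (A : Fin n → Fin n → α) (T : Finset (Fin n × Fin n)) :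
    VK A T Finset.univ = mval A '' (T : Set (Fin n × Fin n)) := by
  unfold VK cellsIn
  ext p
  simp

lemma exists_min_spanning (M : Matroid α) {U W : Set α} {e : α}
    (hUW : U ⊆ W) (hW : W.Finite) (he : e ∈ M.closure W) :
    ∃ X, U ⊆ X ∧ X ⊆ W ∧ e ∈ M.closure X ∧ ∀ x ∈ X, x ∉ U → e ∉ M.closure (X \ {x}) := by
  suffices h : ∀ k (X : Set α), X.ncard ≤ k → U ⊆ X → X ⊆ W → e ∈ M.closure X →
      ∃ X', U ⊆ X' ∧ X' ⊆ W ∧ e ∈ M.closure X' ∧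
        ∀ x ∈ X', x ∉ U → e ∉ M.closure (X' \ {x}) by
    exact h W.ncard W le_rfl hUW subset_rfl he
  intro k
  induction k with
  | zero =>
    intro X hcard hUX hXW heX
    refine ⟨X, hUX, hXW, heX, ?_⟩
    intro x hx _
    have hfin : X.Finite := hW.subset hXW
    have : X.ncard = 0 := Nat.le_zero.mp hcard
    rw [Set.ncard_eq_zero hfin] at this
    simp [this] at hx
  | succ k ih =>
    intro X hcard hUX hXW heX
    by_cases hmin : ∀ x ∈ X, x ∉ U → e ∉ M.closure (X \ {x})
    · exact ⟨X, hUX, hXW, heX, hmin⟩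
    · push_neg at hmin
      obtain ⟨x, hxX, hxU, hecl⟩ := hmin
      have hfin : X.Finite := hW.subset hXW
      refine ih (X \ {x}) ?_ (Set.subset_diff_singleton hUX hxU) (Set.diff_subset.trans hXW) hecl
      have : (X \ {x}).ncard < X.ncard := Set.ncard_diff_singleton_lt_of_mem hxX hfin
      omega

lemma exchange_find {M : Matroid α} {V U W : Set α} {e : α}
    (hV : M.Indep V) (hUW : U ⊆ W) (hWV : W ⊆ V) (hVfin : V.Finite)
    (heE : e ∈ M.E) (heV : e ∉ V) (heW : e ∈ M.closure W) (heU : e ∉ M.closure U) :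
    ∃ x ∈ W, x ∉ U ∧ M.Indep (insert e (V \ {x})) ∧ x ∈ M.closure (insert e (W \ {x})) := by
  obtain ⟨X, hUX, hXW, heX, hmin⟩ :=
    exists_min_spanning M hUW (hVfin.subset hWV) heW
  have hXne : ∃ x, x ∈ X ∧ x ∉ U := by
    by_contra h
    push_neg at h
    exact heU (M.closure_subset_closure h heX)
  obtain ⟨x, hxX, hxU⟩ := hXne
  have hxV : x ∈ V := hWV (hXW hxX)
  have hins : insert x (X \ {x}) = X := Set.insert_diff_singleton.trans (by simp [hxX])
  have hxcl : x ∈ M.closure (insert e (X \ {x})) := by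
    refine (Matroid.closure_exchange (X := X \ {x}) (e := e) (f := x) ?_).1
    rw [hins]
    exact ⟨heX, hmin x hxX hxU⟩
  have hxclW : x ∈ M.closure (insert e (W \ {x})) :=
    M.closure_subset_closure (Set.insert_subset_insert (Set.diff_subset_diff_left hXW)) hxcl
  refine ⟨x, hXW hxX, hxU, ?_, hxclW⟩
  by_contra hdep
  have hVd : M.Indep (V \ {x}) := hV.subset Set.diff_subset
  have heVd : e ∉ V \ {x} := fun h => heV h.1
  rw [hVd.insert_indep_iff_of_notMem heVd] at hdep
  have hecl : e ∈ M.closure (V \ {x}) := by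
    by_contra h
    exact hdep ⟨heE, h⟩
  have hsub : insert e (V \ {x}) ⊆ M.closure (V \ {x}) :=
    Set.insert_subset hecl (M.subset_closure _ (hVd.subset_ground))
  have : x ∈ M.closure (V \ {x}) := by
    have h1 : x ∈ M.closure (insert e (V \ {x})) :=
      M.closure_subset_closure (Set.insert_subset_insert
        (Set.diff_subset_diff_left (hXW.trans hWV))) hxcl
    exact (M.closure_subset_closure_of_subset_closure hsub) h1
  exact hV.notMem_closure_diff_of_mem hxV this

lemma indep_encard_le {M : Matroid α} {I J : Set α} (hI : M.Indep I)
    (hJ : M.Indep J) (hIJ : I ⊆ M.closure J) : I.encard ≤ J.encard := by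
  obtain ⟨I', hI', hII'⟩ := hI.subset_isBasis_of_subset hIJ (M.closure_subset_ground J)
  calc I.encard ≤ I'.encard := Set.encard_mono hII'
    _ = J.encard := hI'.encard_eq_encard hJ.isBasis_closure


structure Tower (M : Matroid α) (A : Fin n → Fin n → α) (t : ℕ) where
  T : Finset (Fin n × Fin n)
  d : ℕ
  ρ : ℕ → Fin n
  K : ℕ → Finset (Fin n)
  hPT : IsPT M A T
  hcardT : T.card = t
  hK0 : K 0 = Finset.univ
  hnest : ∀ i, 1 ≤ i → i ≤ d → K i ⊆ K (i - 1)
  hfree : ∀ i, i ≤ d → freeC T ⊆ K i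
  hρfree : ∀ i, 1 ≤ i → i ≤ d → ρ i ∉ T.image Prod.fst
  hρinj : ∀ i j, 1 ≤ i → i ≤ d → 1 ≤ j → j ≤ d → ρ i = ρ j → i = j
  hforce : ∀ i, 1 ≤ i → i ≤ d → ∀ c ∈ K i, A (ρ i) c ∈ M.closure (VK A T (K (i - 1)))

variable {t : ℕ}

lemma Tower.K_mono (W : Tower M A t) : ∀ i j, j ≤ i → i ≤ W.d → W.K i ⊆ W.K j := by
  intro i
  induction i with
  | zero => intro j hj _; rw [Nat.le_zero.mp hj]
  | succ i ih =>
    intro j hj hd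
    rcases Nat.lt_or_ge j (i+1) with h | h
    · have h1 : W.K (i+1) ⊆ W.K i := by
        have := W.hnest (i+1) (by omega) hd
        simpa using this
      exact h1.trans (ih j (by omega) (by omega))
    · have : j = i + 1 := le_antisymm hj h
      rw [this]

lemma Tower.rows_card (W : Tower M A t) : (W.T.image Prod.fst).card = t := by
  rw [Finset.card_image_of_injOn W.hPT.1, W.hcardT]

lemma Tower.d_le (W : Tower M A t) (ht : t ≤ n) : W.d ≤ n - t := by
  classical
  have hinj2 : Set.InjOn W.ρ (Finset.Icc 1 W.d : Set ℕ) := by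
    intro i hi j hj hij
    simp only [Finset.coe_Icc, Set.mem_Icc] at hi hj
    exact W.hρinj i j hi.1 hi.2 hj.1 hj.2 hij
  have hmaps : ∀ i ∈ Finset.Icc 1 W.d, W.ρ i ∈ Finset.univ \ W.T.image Prod.fst := by
    intro i hi
    simp only [Finset.mem_Icc] at hi
    simp only [Finset.mem_sdiff, Finset.mem_univ, true_and]
    exact W.hρfree i hi.1 hi.2
  have hcard := Finset.card_le_card_of_injOn W.ρ hmaps (by
    intro a ha b hb hab
    exact hinj2 (by simpa using ha) (by simpa using hb) hab)
  rw [Nat.card_Icc] at hcard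
  have : (Finset.univ \ W.T.image Prod.fst).card = n - t := by
    rw [Finset.card_sdiff_of_subset (Finset.subset_univ _), W.rows_card, Finset.card_univ,
      Fintype.card_fin]
  omega

lemma Tower.cap (W : Tower M A t) (hinj : Function.Injective (mval A))
    (hrows : ∀ i : Fin n, M.IsBase (Set.range (A i))) :
    ∀ i, 1 ≤ i → i ≤ W.d → (W.K i).card + (n - t) ≤ (W.K (i-1)).card := by
  intro i hi1 hid
  set I : Set α := (fun c => A (W.ρ i) c) '' ↑(W.K i) with hI
  have hAinj : Function.Injective (fun c => A (W.ρ i) c) := by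
    intro c1 c2 hc
    have : ((W.ρ i, c1) : Fin n × Fin n) = (W.ρ i, c2) := hinj hc
    exact congrArg Prod.snd this
  have hIencard : I.encard = ((W.K i).card : ℕ∞) := by
    rw [hI, Set.InjOn.encard_image hAinj.injOn, Set.encard_coe_eq_coe_finsetCard]
  have hIindep : M.Indep I := by
    refine (hrows (W.ρ i)).indep.subset ?_
    rintro _ ⟨c, _, rfl⟩
    exact ⟨c, rfl⟩
  have hIcl : I ⊆ M.closure (VK A W.T (W.K (i-1))) := by
    rintro _ ⟨c, hc, rfl⟩
    exact W.hforce i hi1 hid c hc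
  have hJindep : M.Indep (VK A W.T (W.K (i-1))) :=
    W.hPT.2.2.subset (VK_subset_values A W.T _)
  have hle := indep_encard_le hIindep hJindep hIcl
  have hJcard : (VK A W.T (W.K (i-1))).encard = ((cellsIn W.T (W.K (i-1))).card : ℕ∞) :=
    VK_encard hinj _
  rw [hIencard, hJcard, Nat.cast_le] at hle
  have hcount := cellsIn_card W.hPT (W.hfree (i-1) (by omega))
  have hfc : (freeC W.T).card = n - t := freeC_card W.hPT W.hcardT
  omega


/-- the lexicographic-style natural number measure of a tower -/
def meas (W : Tower M A t) : ℕ :=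
  ∑ i ∈ Finset.range W.d, (((W.K (i+1)).card + 1) * (n+2)^(n - (i+1)))

lemma geo_aux (a : ℕ) : ∀ d, a ≤ d → d ≤ n →
    (∑ i ∈ Finset.Ico a d, (n+1) * (n+2)^(n - (i+1))) + (n+2)^(n-d) ≤ (n+2)^(n-a) := by
  intro d
  induction d with
  | zero =>
    intro h1 _
    rw [Nat.le_zero.mp h1]
    simp
  | succ d ih =>
    intro h1 h2
    rcases Nat.lt_or_ge a (d+1) with h | h
    · have had : a ≤ d := by omega
      have hsum := Finset.sum_Ico_succ_top had (fun i => (n+1) * (n+2)^(n - (i+1)))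
      rw [hsum]
      have hpow : (n+2)^(n-d) = (n+2) * (n+2)^(n-(d+1)) := by
        have : n - d = (n - (d+1)) + 1 := by omega
        rw [this, pow_succ]
        ring
      have := ih had (by omega)
      calc (∑ i ∈ Finset.Ico a d, (n+1) * (n+2)^(n - (i+1))) + (n+1) * (n+2)^(n-(d+1))
            + (n+2)^(n-(d+1))
          = (∑ i ∈ Finset.Ico a d, (n+1) * (n+2)^(n - (i+1))) + (n+2)^(n-d) := by
            rw [hpow]; ring
        _ ≤ (n+2)^(n-a) := this
    · have : a = d + 1 := by omega
      rw [this]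
      simp


lemma meas_bound (W : Tower M A t) : meas W < (n+2)^(n+2) := by
  have hterm : ∀ i ∈ Finset.range W.d,
      ((W.K (i+1)).card + 1) * (n+2)^(n - (i+1)) ≤ (n+1) * (n+2)^n := by
    intro i _
    have h1 : (W.K (i+1)).card + 1 ≤ n + 1 := by
      have := Finset.card_le_univ (W.K (i+1))
      simpa using this
    have h2 : (n+2)^(n - (i+1)) ≤ (n+2)^n :=
      Nat.pow_le_pow_right (by omega) (by omega)
    exact Nat.mul_le_mul h1 h2
  have hsum : meas W ≤ W.d * ((n+1) * (n+2)^n) := by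
    calc meas W ≤ ∑ _i ∈ Finset.range W.d, (n+1) * (n+2)^n := Finset.sum_le_sum hterm
      _ = W.d * ((n+1) * (n+2)^n) := by rw [Finset.sum_const, Finset.card_range, smul_eq_mul]
  have hd : W.d ≤ n - t := W.d_le (by
    have := W.rows_card (M := M)
    calc t = (W.T.image Prod.fst).card := this.symm
      _ ≤ n := by simpa using Finset.card_le_univ (W.T.image Prod.fst))
  have hdn : W.d ≤ n := by omega
  have hpow : (n+2)^(n+2) = ((n+2)*(n+2)) * (n+2)^n := by ring
  have h3 : W.d * ((n+1) * (n+2)^n) < ((n+2)*(n+2)) * (n+2)^n := by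
    have hp : 0 < (n+2)^n := Nat.pow_pos (by omega)
    have : W.d * (n+1) < (n+2)*(n+2) := by nlinarith
    calc W.d * ((n+1) * (n+2)^n) = (W.d * (n+1)) * (n+2)^n := by ring
      _ < ((n+2)*(n+2)) * (n+2)^n := (Nat.mul_lt_mul_right hp).mpr this
  omega

lemma Tower.t_le (_W : Tower M A t) : t ≤ n := by
  have := _W.rows_card (M := M)
  calc t = (_W.T.image Prod.fst).card := this.symm
    _ ≤ n := by simpa using Finset.card_le_univ (_W.T.image Prod.fst)

lemma meas_lt_macro (W W' : Tower M A t) (ℓ : ℕ) (hℓ1 : 1 ≤ ℓ) (hℓd : ℓ ≤ W.d)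
    (hd' : W'.d = ℓ) (hpre : ∀ i, i < ℓ → W'.K i = W.K i)
    (hcard : (W'.K ℓ).card = (W.K ℓ).card + 1) : meas W < meas W' := by
  obtain ⟨m, rfl⟩ : ∃ m, ℓ = m + 1 := ⟨ℓ - 1, by omega⟩
  set b := n + 2 with hb
  set f : ℕ → ℕ := fun i => ((W.K (i+1)).card + 1) * b^(n - (i+1)) with hf
  have hdn : W.d ≤ n := by
    have := W.d_le (W.t_le); omega
  have hW' : meas W' = (∑ i ∈ Finset.range m, f i) + ((W.K (m+1)).card + 2) * b^(n-(m+1)) := by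
    rw [meas, hd', Finset.sum_range_succ]
    congr 1
    · apply Finset.sum_congr rfl
      intro i hi
      rw [Finset.mem_range] at hi
      rw [hf, hpre (i+1) (by omega)]
    · rw [hcard]
  have hW : meas W = (∑ i ∈ Finset.range m, f i) + f m + ∑ i ∈ Finset.Ico (m+1) W.d, f i := by
    rw [meas, ← Finset.sum_range_add_sum_Ico _ hℓd, Finset.sum_range_succ]
  have htail : (∑ i ∈ Finset.Ico (m+1) W.d, f i) + b^(n - W.d) ≤ b^(n-(m+1)) := by
    have h1 : ∀ i ∈ Finset.Ico (m+1) W.d, f i ≤ (n+1) * b^(n - (i+1)) := by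
      intro i _
      apply Nat.mul_le_mul_right
      have := Finset.card_le_univ (W.K (i+1))
      simpa using this
    calc (∑ i ∈ Finset.Ico (m+1) W.d, f i) + b^(n - W.d)
        ≤ (∑ i ∈ Finset.Ico (m+1) W.d, (n+1) * b^(n-(i+1))) + b^(n - W.d) := by
          exact Nat.add_le_add_right (Finset.sum_le_sum h1) _
      _ ≤ b^(n-(m+1)) := geo_aux (m+1) W.d hℓd hdn
  have hpos : 0 < b^(n - W.d) := Nat.pow_pos (by omega)
  have hfm : f m = ((W.K (m+1)).card + 1) * b^(n-(m+1)) := rfl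
  rw [hW, hW']
  have : f m + ∑ i ∈ Finset.Ico (m+1) W.d, f i < ((W.K (m+1)).card + 2) * b^(n-(m+1)) := by
    have h2 : ((W.K (m+1)).card + 2) * b^(n-(m+1))
        = ((W.K (m+1)).card + 1) * b^(n-(m+1)) + b^(n-(m+1)) := by ring
    rw [h2, hfm]
    omega
  omega

lemma meas_lt_create (W W' : Tower M A t) (hd' : W'.d = W.d + 1)
    (hpre : ∀ i, i ≤ W.d → W'.K i = W.K i) : meas W < meas W' := by
  have hW' : meas W' = meas W + ((W'.K (W.d+1)).card + 1) * (n+2)^(n - (W.d+1)) := by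
    rw [meas, meas, hd', Finset.sum_range_succ]
    congr 1
    apply Finset.sum_congr rfl
    intro i hi
    rw [Finset.mem_range] at hi
    rw [hpre (i+1) (by omega)]
  have hpos : 0 < ((W'.K (W.d+1)).card + 1) * (n+2)^(n - (W.d+1)) :=
    Nat.mul_pos (by omega) (Nat.pow_pos (by omega))
  omega


lemma macro_step (hinj : Function.Injective (mval A))
    (hrows : ∀ i : Fin n, M.IsBase (Set.range (A i)))
    (hmax : ∀ T' : Finset (Fin n × Fin n), IsPT M A T' → T'.card ≤ t) :
    ∀ j, 1 ≤ j → ∀ (W : Tower M A t), j ≤ W.d →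
    ∀ r c : Fin n, r ∉ W.T.image Prod.fst → c ∉ W.T.image Prod.snd →
    (∀ i, 1 ≤ i → i ≤ j → W.ρ i ≠ r) →
    A r c ∈ M.closure (VK A W.T (W.K (j-1))) →
    A r c ∉ M.closure (VK A W.T (W.K j)) →
    ∃ (W' : Tower M A t) (ℓ : ℕ), 1 ≤ ℓ ∧ ℓ ≤ j ∧ W'.d = ℓ ∧
      (∀ i, i < ℓ → W'.K i = W.K i) ∧ (W'.K ℓ).card = (W.K ℓ).card + 1 := by
  intro j
  induction j using Nat.strong_induction_on with
  | _ j IH =>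
  intro hj1 W hjd r c hr hc hrρ he1 he2
  classical
  set e : α := A r c with he_def
  set V : Set α := mval A '' (W.T : Set (Fin n × Fin n)) with hV_def
  set Uv : Set α := VK A W.T (W.K j) with hU_def
  set Wv : Set α := VK A W.T (W.K (j-1)) with hW_def
  have hUW : Uv ⊆ Wv := VK_mono A W.T (W.hnest j hj1 hjd)
  have hWV : Wv ⊆ V := VK_subset_values A W.T _
  have hVind : M.Indep V := W.hPT.2.2
  have hVfin : V.Finite := (W.T : Set (Fin n × Fin n)).toFinite.image _
  have heE : e ∈ M.E := (hrows r).subset_ground ⟨c, rfl⟩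
  have hrcT : (r, c) ∉ W.T := fun hm => hr (Finset.mem_image_of_mem Prod.fst hm)
  have heV : e ∉ V := by
    rintro ⟨q, hq, hqe⟩
    have : q = (r, c) := hinj hqe
    rw [this] at hq
    exact hrcT hq
  obtain ⟨x, hxW, hxU, hxind, hxcl⟩ :=
    exchange_find hVind hUW hWV hVfin heE heV he1 he2
  -- extract the cell p of value x
  obtain ⟨p, hpcell, hpx⟩ := hxW
  have hpT : p ∈ W.T := by
    have := hpcell
    simp only [cellsIn, Finset.coe_filter, Set.mem_setOf_eq] at this
    exact this.1
  have hγ1 : p.2 ∈ W.K (j-1) := by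
    have := hpcell
    simp only [cellsIn, Finset.coe_filter, Set.mem_setOf_eq] at this
    exact this.2
  set γ : Fin n := p.2 with hγ_def
  have hγ2 : γ ∉ W.K j := by
    intro hmem
    apply hxU
    rw [hU_def, VK]
    exact ⟨p, by simp only [cellsIn, Finset.coe_filter, Set.mem_setOf_eq]; exact ⟨hpT, hmem⟩, hpx⟩
  set T' : Finset (Fin n × Fin n) := insert (r, c) (W.T.erase p) with hT'_def
  have hrcT' : (r, c) ∉ W.T.erase p := fun hm => hrcT (Finset.mem_of_mem_erase hm)
  have hT'card : T'.card = t := by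
    rw [hT'_def, Finset.card_insert_of_notMem hrcT', Finset.card_erase_of_mem hpT, W.hcardT]
    have : 1 ≤ t := by
      rw [← W.hcardT]
      exact Finset.card_pos.mpr ⟨p, hpT⟩
    omega
  have hT'coe : (T' : Set (Fin n × Fin n)) = insert (r, c) ((W.T : Set _) \ {p}) := by
    rw [hT'_def]
    push_cast
    rfl
  have hval' : mval A '' (T' : Set (Fin n × Fin n)) = insert e (V \ {x}) := by
    rw [hT'coe, Set.image_insert_eq, Set.image_diff hinj, Set.image_singleton, hpx]
    rfl
  have hPT' : IsPT M A T' := by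
    refine ⟨?_, ?_, ?_⟩
    · rw [hT'coe]
      intro a ha b hb hab
      rcases ha with ha | ha <;> rcases hb with hb | hb
      · rw [ha, hb]
      · exfalso; apply hr
        have hm : b.1 ∈ W.T.image Prod.fst := Finset.mem_image_of_mem Prod.fst hb.1
        rw [ha] at hab; simpa [← hab] using hm
      · exfalso; apply hr
        have hm : a.1 ∈ W.T.image Prod.fst := Finset.mem_image_of_mem Prod.fst ha.1
        rw [hb] at hab; simpa [hab] using hm
      · exact W.hPT.1 ha.1 hb.1 hab
    · rw [hT'coe]
      intro a ha b hb hab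
      rcases ha with ha | ha <;> rcases hb with hb | hb
      · rw [ha, hb]
      · exfalso; apply hc
        have hm : b.2 ∈ W.T.image Prod.snd := Finset.mem_image_of_mem Prod.snd hb.1
        rw [ha] at hab; simpa [← hab] using hm
      · exfalso; apply hc
        have hm : a.2 ∈ W.T.image Prod.snd := Finset.mem_image_of_mem Prod.snd ha.1
        rw [hb] at hab; simpa [hab] using hm
      · exact W.hPT.2.1 ha.1 hb.1 hab
    · rw [hval']
      exact hxind
  -- row / column membership facts for `T'`
  have hrow' : ∀ ρ' : Fin n, ρ' ∉ W.T.image Prod.fst → ρ' ≠ r → ρ' ∉ T'.image Prod.fst := by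
    intro ρ' h1 h2 hmem
    rw [hT'_def] at hmem
    simp only [Finset.image_insert, Finset.mem_insert] at hmem
    rcases hmem with h | h
    · exact h2 h
    · exact h1 (Finset.image_subset_image (Finset.erase_subset p W.T) h)
  have hγcol' : γ ∉ T'.image Prod.snd := by
    intro hmem
    rw [hT'_def] at hmem
    simp only [Finset.image_insert, Finset.mem_insert] at hmem
    rcases hmem with h | h
    · exact hc (by rw [← h]; exact Finset.mem_image_of_mem Prod.snd hpT)
    · obtain ⟨q, hq, hq2⟩ := Finset.mem_image.mp h
      have hqT : q ∈ W.T := Finset.mem_of_mem_erase hq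
      have : q = p := W.hPT.2.1 (by exact_mod_cast hqT) (by exact_mod_cast hpT) hq2
      exact (Finset.ne_of_mem_erase hq) this
  have hfree' : freeC T' ⊆ insert γ (freeC W.T) := by
    intro col hcol
    simp only [freeC, Finset.mem_sdiff, Finset.mem_univ, true_and] at hcol
    by_cases hγcol : col = γ
    · simp [hγcol]
    · apply Finset.mem_insert_of_mem
      simp only [freeC, Finset.mem_sdiff, Finset.mem_univ, true_and]
      intro hmem
      apply hcol
      obtain ⟨q, hq, hq2⟩ := Finset.mem_image.mp hmem
      have hqp : q ≠ p := by
        intro hqp; rw [hqp] at hq2; exact hγcol hq2.symm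
      exact Finset.mem_image.mpr
        ⟨q, Finset.mem_insert_of_mem (Finset.mem_erase.mpr ⟨hqp, hq⟩), hq2⟩
  -- the key closure preservation fact
  have hcells : ∀ X : Finset (Fin n), c ∈ X → γ ∈ X →
      ((cellsIn T' X : Finset (Fin n × Fin n)) : Set (Fin n × Fin n)) =
        insert (r, c) (((cellsIn W.T X : Finset _) : Set (Fin n × Fin n)) \ {p}) := by
    intro X hcX hγX
    ext q
    simp only [cellsIn, Finset.coe_filter, Set.mem_setOf_eq, hT'_def, Finset.mem_insert,
      Finset.mem_erase, Set.mem_insert_iff, Set.mem_diff, Set.mem_singleton_iff]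
    constructor
    · rintro ⟨hq | ⟨hqp, hqT⟩, hqX⟩
      · exact Or.inl hq
      · exact Or.inr ⟨⟨hqT, hqX⟩, hqp⟩
    · rintro (hq | ⟨⟨hqT, hqX⟩, hqp⟩)
      · exact ⟨Or.inl hq, by rw [hq]; exact hcX⟩
      · exact ⟨Or.inr ⟨hqp, hqT⟩, hqX⟩
  have hVK' : ∀ X : Finset (Fin n), c ∈ X → γ ∈ X →
      VK A T' X = insert e (VK A W.T X \ {x}) := by
    intro X hcX hγX
    rw [VK, hcells X hcX hγX, Set.image_insert_eq, Set.image_diff hinj, Set.image_singleton,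
      hpx]
    rfl
  have hcfree : c ∈ freeC W.T := by simp [freeC, hc]
  have hpres : ∀ X : Finset (Fin n), c ∈ X → W.K (j-1) ⊆ X →
      M.closure (VK A T' X) = M.closure (VK A W.T X) := by
    intro X hcX hKX
    have hγX : γ ∈ X := hKX hγ1
    have hVKX : VK A T' X = insert e (VK A W.T X \ {x}) := hVK' X hcX hγX
    have hWsub : Wv ⊆ VK A W.T X := VK_mono A W.T hKX
    have hEsub : VK A W.T X ⊆ M.E :=
      (W.hPT.2.2.subset (VK_subset_values A W.T X)).subset_ground
    apply subset_antisymm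
    · apply M.closure_subset_closure_of_subset_closure
      rw [hVKX]
      apply Set.insert_subset
      · exact M.closure_subset_closure hWsub he1
      · exact Set.diff_subset.trans (M.subset_closure _ hEsub)
    · apply M.closure_subset_closure_of_subset_closure
      intro y hy
      by_cases hyx : y = x
      · subst hyx
        have hsub : insert e (Wv \ {y}) ⊆ insert e (VK A W.T X \ {y}) :=
          Set.insert_subset_insert (Set.diff_subset_diff_left hWsub)
        have := M.closure_subset_closure hsub hxcl
        rw [hVKX]
        exact this
      · rw [hVKX]
        have hyE : y ∈ M.E := hEsub hy
        have : y ∈ insert e (VK A W.T X \ {x}) :=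
          Set.mem_insert_of_mem _ ⟨hy, hyx⟩
        exact M.subset_closure _ (by
          rw [← hVKX]
          exact (hPT'.2.2.subset (VK_subset_values A T' X)).subset_ground) this
  have hKj1c : c ∈ W.K (j-1) := W.hfree (j-1) (by omega) hcfree
  by_cases hsucc : A (W.ρ j) γ ∈ M.closure (VK A W.T (W.K (j-1)))
  · -- success: extend level j
    set Knew : ℕ → Finset (Fin n) := fun i => if i = j then insert γ (W.K j) else W.K i
      with hKnew
    refine ⟨⟨T', j, W.ρ, Knew, hPT', hT'card, ?_, ?_, ?_, ?_, ?_, ?_⟩,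
      j, hj1, le_refl j, rfl, ?_, ?_⟩
    · -- hK0
      show Knew 0 = Finset.univ
      simp only [hKnew]
      rw [if_neg (by omega : (0:ℕ) ≠ j)]
      exact W.hK0
    · -- hnest
      intro i hi1 hid
      show Knew i ⊆ Knew (i-1)
      simp only [hKnew]
      by_cases hij : i = j
      · subst hij
        rw [if_pos rfl, if_neg (by omega : i - 1 ≠ i)]
        exact Finset.insert_subset hγ1 (W.hnest i hi1 hjd)
      · rw [if_neg hij, if_neg (by omega : i - 1 ≠ j)]
        exact W.hnest i hi1 (by omega)
    · -- hfree
      intro i hid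
      show freeC T' ⊆ Knew i
      simp only [hKnew]
      by_cases hij : i = j
      · subst hij
        rw [if_pos rfl]
        intro col hcol
        rcases Finset.mem_insert.mp (hfree' hcol) with h | h
        · rw [h]; exact Finset.mem_insert_self _ _
        · exact Finset.mem_insert_of_mem (W.hfree i hjd h)
      · rw [if_neg hij]
        intro col hcol
        rcases Finset.mem_insert.mp (hfree' hcol) with h | h
        · rw [h]
          exact W.K_mono (j-1) i (by omega) (by omega) hγ1
        · exact W.hfree i (by omega) h
    · -- hρfree
      intro i hi1 hid
      exact hrow' (W.ρ i) (W.hρfree i hi1 (by omega)) (hrρ i hi1 hid)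
    · -- hρinj
      intro i i' h1 h2 h3 h4 h5
      exact W.hρinj i i' h1 (by omega) h3 (by omega) h5
    · -- hforce
      intro i hi1 hid c' hc'
      show A (W.ρ i) c' ∈ M.closure (VK A T' (Knew (i-1)))
      have hi1j : i - 1 ≠ j := by omega
      simp only [hKnew] at hc' ⊢
      rw [if_neg hi1j]
      rw [hpres (W.K (i-1)) (W.hfree (i-1) (by omega) hcfree)
        (W.K_mono (j-1) (i-1) (by omega) (by omega))]
      by_cases hij : i = j
      · subst hij
        rw [if_pos rfl] at hc'
        rcases Finset.mem_insert.mp hc' with h | h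
        · rw [h]; exact hsucc
        · exact W.hforce i hi1 hjd c' h
      · rw [if_neg hij] at hc'
        exact W.hforce i hi1 (by omega) c' hc'
    · -- prefix
      intro i hi
      show Knew i = W.K i
      simp only [hKnew]
      rw [if_neg (by omega : i ≠ j)]
    · -- card
      show (Knew j).card = (W.K j).card + 1
      have hKj : Knew j = insert γ (W.K j) := by simp [hKnew]
      rw [hKj, Finset.card_insert_of_notMem hγ2]
  · -- failure: recurse at a lower level
    -- the truncated tower of depth j - 1
    set W₁ : Tower M A t := ⟨T', j - 1, W.ρ, W.K, hPT', hT'card, W.hK0,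
      fun i hi1 hid => W.hnest i hi1 (by omega),
      fun i hid => by
        intro col hcol
        rcases Finset.mem_insert.mp (hfree' hcol) with h | h
        · rw [h]; exact W.K_mono (j-1) i (by omega) (by omega) hγ1
        · exact W.hfree i (by omega) h,
      fun i hi1 hid => hrow' (W.ρ i) (W.hρfree i hi1 (by omega)) (hrρ i hi1 (by omega)),
      fun i i' h1 h2 h3 h4 h5 => W.hρinj i i' h1 (by omega) h3 (by omega) h5,
      fun i hi1 hid c' hc' => by
        rw [hpres (W.K (i-1)) (W.hfree (i-1) (by omega) hcfree)
          (W.K_mono (j-1) (i-1) (by omega) (by omega))]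
        exact W.hforce i hi1 (by omega) c' hc'⟩ with hW₁_def
    have hρjfree : W.ρ j ∉ T'.image Prod.fst :=
      hrow' (W.ρ j) (W.hρfree j hj1 hjd) (hrρ j hj1 le_rfl)
    -- the pair (ρ j, γ) is free in T' and violated at level j - 1
    have hγforced : A (W.ρ j) γ ∈ M.closure (VK A T' (W.K 0)) := by
      rw [W.hK0, VK_univ]
      exact forced hinj hrows hmax hPT' hT'card hρjfree hγcol'
    have hγviol : A (W.ρ j) γ ∉ M.closure (VK A T' (W.K (j-1))) := by
      rw [hpres (W.K (j-1)) hKj1c subset_rfl]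
      exact hsucc
    -- find the minimal violated level
    set P : ℕ → Prop := fun i => A (W.ρ j) γ ∉ M.closure (VK A T' (W.K i)) with hP_def
    have hPex : ∃ i, P i := ⟨j-1, hγviol⟩
    set j' := Nat.find hPex with hj'_def
    have hPj' : A (W.ρ j) γ ∉ M.closure (VK A T' (W.K j')) := Nat.find_spec hPex
    have hj'le : j' ≤ j - 1 := Nat.find_le hγviol
    have hj'1 : 1 ≤ j' := by
      rcases Nat.eq_zero_or_pos j' with h | h
      · exfalso; apply hPj'; rw [h]; exact hγforced
      · exact h
    have hPj'm : A (W.ρ j) γ ∈ M.closure (VK A T' (W.K (j'-1))) := by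
      by_contra h
      have := Nat.find_le (h := hPex) (show P (j'-1) from h)
      omega
    have hrρ' : ∀ i, 1 ≤ i → i ≤ j' → W.ρ i ≠ W.ρ j := by
      intro i h1 h2 h
      have := W.hρinj i j h1 (by omega) hj1 hjd h
      omega
    obtain ⟨W', ℓ, hℓ1, hℓj', hd', hpre, hcard⟩ :=
      IH j' (by omega) (by omega) W₁ (by
        show j' ≤ j - 1
        exact hj'le) (W.ρ j) γ hρjfree hγcol' hrρ' hPj'm hPj'
    exact ⟨W', ℓ, hℓ1, by omega, hd', hpre, hcard⟩


lemma main_aux (hinj : Function.Injective (mval A))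
    (hrows : ∀ i : Fin n, M.IsBase (Set.range (A i)))
    (hmax : ∀ T' : Finset (Fin n × Fin n), IsPT M A T' → T'.card ≤ t) :
    ∀ N : ℕ, ∀ W : Tower M A t, (n+2)^(n+2) - meas W ≤ N →
    (n - t) + (n - t) * (n - t) ≤ n := by
  intro N
  induction N with
  | zero =>
    intro W h
    have := meas_bound W
    omega
  | succ N ih =>
    intro W h
    classical
    by_cases hbad : ∃ r c : Fin n, r ∉ W.T.image Prod.fst ∧ c ∉ W.T.image Prod.snd ∧
        (∀ i, 1 ≤ i → i ≤ W.d → W.ρ i ≠ r) ∧ A r c ∉ M.closure (VK A W.T (W.K W.d))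
    · -- progress by a macro step
      obtain ⟨r, c, hr, hc, hrρ, hviol⟩ := hbad
      set P : ℕ → Prop := fun i => A r c ∉ M.closure (VK A W.T (W.K i)) with hP_def
      have hPex : ∃ i, P i := ⟨W.d, hviol⟩
      set j := Nat.find hPex with hj_def
      have hPj : A r c ∉ M.closure (VK A W.T (W.K j)) := Nat.find_spec hPex
      have hjle : j ≤ W.d := Nat.find_le hviol
      have hforced0 : A r c ∈ M.closure (VK A W.T (W.K 0)) := by
        rw [W.hK0, VK_univ]
        exact forced hinj hrows hmax W.hPT W.hcardT hr hc
      have hj1 : 1 ≤ j := by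
        rcases Nat.eq_zero_or_pos j with h0 | h0
        · exfalso; apply hPj; rw [h0]; exact hforced0
        · exact h0
      have hPjm : A r c ∈ M.closure (VK A W.T (W.K (j-1))) := by
        by_contra hcon
        have := Nat.find_le (h := hPex) (show P (j-1) from hcon)
        omega
      obtain ⟨W', ℓ, hℓ1, hℓj, hd', hpre, hcard⟩ :=
        macro_step hinj hrows hmax j hj1 W hjle r c hr hc
          (fun i h1 h2 => hrρ i h1 (by omega)) hPjm hPj
      have hlt : meas W < meas W' :=
        meas_lt_macro W W' ℓ hℓ1 (by omega) hd' hpre hcard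
      have hb := meas_bound W
      exact ih W' (by omega)
    · by_cases hrow : ∃ r₀ : Fin n, r₀ ∉ W.T.image Prod.fst ∧
          (∀ i, 1 ≤ i → i ≤ W.d → W.ρ i ≠ r₀)
      · -- create a new level
        obtain ⟨r₀, hr₀, hr₀ρ⟩ := hrow
        push_neg at hbad
        set Knew : ℕ → Finset (Fin n) :=
          fun i => if i = W.d + 1 then freeC W.T else W.K i with hKnew
        set ρnew : ℕ → Fin n := fun i => if i = W.d + 1 then r₀ else W.ρ i with hρnew
        have hW' : ∃ W' : Tower M A t, W'.d = W.d + 1 ∧ W'.K = Knew := by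
          refine ⟨⟨W.T, W.d + 1, ρnew, Knew, W.hPT, W.hcardT, ?_, ?_, ?_, ?_, ?_, ?_⟩, rfl, rfl⟩
          · show Knew 0 = Finset.univ
            simp only [hKnew]
            rw [if_neg (by omega : (0:ℕ) ≠ W.d + 1)]
            exact W.hK0
          · intro i hi1 hid
            show Knew i ⊆ Knew (i-1)
            simp only [hKnew]
            by_cases hij : i = W.d + 1
            · rw [if_pos hij, if_neg (by omega : i - 1 ≠ W.d + 1)]
              have : i - 1 = W.d := by omega
              rw [this]
              exact W.hfree W.d le_rfl
            · rw [if_neg hij, if_neg (by omega : i - 1 ≠ W.d + 1)]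
              exact W.hnest i hi1 (by omega)
          · intro i hid
            show freeC W.T ⊆ Knew i
            simp only [hKnew]
            by_cases hij : i = W.d + 1
            · rw [if_pos hij]
            · rw [if_neg hij]
              exact W.hfree i (by omega)
          · intro i hi1 hid
            show ρnew i ∉ W.T.image Prod.fst
            simp only [hρnew]
            by_cases hij : i = W.d + 1
            · rw [if_pos hij]; exact hr₀
            · rw [if_neg hij]; exact W.hρfree i hi1 (by omega)
          · intro i i' h1 h2 h3 h4 h5
            simp only [hρnew] at h5
            by_cases hij : i = W.d + 1 <;> by_cases hij' : i' = W.d + 1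
            · omega
            · exfalso
              rw [if_pos hij, if_neg hij'] at h5
              exact hr₀ρ i' h3 (by omega) h5.symm
            · exfalso
              rw [if_neg hij, if_pos hij'] at h5
              exact hr₀ρ i h1 (by omega) h5
            · rw [if_neg hij, if_neg hij'] at h5
              exact W.hρinj i i' h1 (by omega) h3 (by omega) h5
          · intro i hi1 hid c' hc'
            show A (ρnew i) c' ∈ M.closure (VK A W.T (Knew (i-1)))
            simp only [hKnew, hρnew] at hc' ⊢
            by_cases hij : i = W.d + 1
            · rw [if_pos hij] at hc'
              rw [if_pos hij, if_neg (by omega : i - 1 ≠ W.d + 1)]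
              have hid1 : i - 1 = W.d := by omega
              rw [hid1]
              have hc'free : c' ∉ W.T.image Prod.snd := by
                have := hc'
                simp only [freeC, Finset.mem_sdiff] at this
                exact this.2
              exact hbad r₀ c' hr₀ hc'free hr₀ρ
            · rw [if_neg hij] at hc'
              rw [if_neg hij, if_neg (by omega : i - 1 ≠ W.d + 1)]
              exact W.hforce i hi1 (by omega) c' hc'
        obtain ⟨W', hd', hK'⟩ := hW'
        have hlt : meas W < meas W' := by
          apply meas_lt_create W W' hd'
          intro i hi
          rw [hK']
          simp only [hKnew]
          rw [if_neg (by omega : i ≠ W.d + 1)]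
        have hb := meas_bound W
        exact ih W' (by omega)
      · -- terminal case : all free rows are fixed
        push_neg at hrow
        -- every free row is one of the ρ i, so n - t ≤ W.d
        have hsub : Finset.univ \ W.T.image Prod.fst ⊆ (Finset.Icc 1 W.d).image W.ρ := by
          intro r hr
          rw [Finset.mem_sdiff] at hr
          obtain ⟨i, h1, h2, h3⟩ := hrow r hr.2
          exact Finset.mem_image.mpr ⟨i, Finset.mem_Icc.mpr ⟨h1, h2⟩, h3⟩
        have hc1 : (Finset.univ \ W.T.image Prod.fst).card = n - t := by
          rw [Finset.card_sdiff_of_subset (Finset.subset_univ _), W.rows_card, Finset.card_univ,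
            Fintype.card_fin]
        have hc2 : ((Finset.Icc 1 W.d).image W.ρ).card ≤ W.d := by
          calc ((Finset.Icc 1 W.d).image W.ρ).card ≤ (Finset.Icc 1 W.d).card :=
              Finset.card_image_le
            _ = W.d := by rw [Nat.card_Icc]; omega
        have hst : n - t ≤ W.d := by
          have := Finset.card_le_card hsub
          omega
        have hchain : ∀ i, i ≤ W.d → (W.K i).card + i * (n - t) ≤ n := by
          intro i
          induction i with
          | zero =>
            intro _
            rw [W.hK0]
            simp [Finset.card_univ]
          | succ i ihc =>
            intro hle
            have hcap := W.cap hinj hrows (i+1) (by omega) hle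
            have h1 := ihc (by omega)
            have h2 : (i+1) - 1 = i := by omega
            rw [h2] at hcap
            calc (W.K (i+1)).card + (i+1)*(n-t)
                = ((W.K (i+1)).card + (n-t)) + i*(n-t) := by ring
              _ ≤ (W.K i).card + i*(n-t) := Nat.add_le_add_right hcap _
              _ ≤ n := h1
        have hKd : n - t ≤ (W.K W.d).card := by
          have hle := Finset.card_le_card (W.hfree W.d le_rfl)
          rw [freeC_card W.hPT W.hcardT] at hle
          omega
        have hfin := hchain W.d le_rfl
        calc (n - t) + (n-t)*(n-t)
            ≤ (W.K W.d).card + W.d * (n-t) :=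
              Nat.add_le_add hKd (Nat.mul_le_mul_right (n-t) hst)
          _ ≤ n := hfin

end RowMLS

/-- Corollary 4.1: Let `M` be a matroid of rank `n` (every base has `n`
elements) and let `A` be a row Matroidal Latin Square of degree `n` over `M`:
an `n × n` matrix with pairwise distinct entries in the ground set, each of
whose rows is a base of `M`. Then `A` has an independent partial transversal of
size at least `n - √n`: a set of cells, no two in the same row or column, whose
entries form an independent set in `M`. -/
theorem row_mls_independent_partial_transversal {α : Type*} (M : Matroid α) (n : ℕ)
    (hrank : ∀ B : Set α, M.IsBase B → B.ncard = n)
    (A : Fin n → Fin n → α)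
    (hinj : Function.Injective (fun p : Fin n × Fin n => A p.1 p.2))
    (hrows : ∀ i : Fin n, M.IsBase (Set.range (A i))) :
    ∃ T : Finset (Fin n × Fin n),
      Set.InjOn (fun p : Fin n × Fin n => p.1) (T : Set (Fin n × Fin n)) ∧
      Set.InjOn (fun p : Fin n × Fin n => p.2) (T : Set (Fin n × Fin n)) ∧
      M.Indep ((fun p : Fin n × Fin n => A p.1 p.2) '' (T : Set (Fin n × Fin n))) ∧
      (n : ℝ) - Real.sqrt n ≤ T.card := by
  classical
  have hinj' : Function.Injective (RowMLS.mval A) := hinj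
  set 𝒮 : Finset (Finset (Fin n × Fin n)) :=
    Finset.univ.filter (fun T => RowMLS.IsPT M A T) with h𝒮
  have hempty : (∅ : Finset (Fin n × Fin n)) ∈ 𝒮 := by
    rw [h𝒮, Finset.mem_filter]
    refine ⟨Finset.mem_univ _, ?_, ?_, ?_⟩
    · simp
    · simp
    · simp [M.empty_indep]
  obtain ⟨T₀, hT₀S, hT₀max⟩ := Finset.exists_max_image 𝒮 Finset.card ⟨∅, hempty⟩
  have hT₀ : RowMLS.IsPT M A T₀ := by
    rw [h𝒮, Finset.mem_filter] at hT₀S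
    exact hT₀S.2
  set t := T₀.card with ht
  have hmax : ∀ T' : Finset (Fin n × Fin n), RowMLS.IsPT M A T' → T'.card ≤ t := by
    intro T' h
    exact hT₀max T' (by rw [h𝒮, Finset.mem_filter]; exact ⟨Finset.mem_univ _, h⟩)
  have htn : t ≤ n := by
    have h1 : (T₀.image Prod.fst).card = t := Finset.card_image_of_injOn hT₀.1
    calc t = (T₀.image Prod.fst).card := h1.symm
      _ ≤ n := by simpa using Finset.card_le_univ (T₀.image Prod.fst)
  have hkey : (n - t) + (n - t) * (n - t) ≤ n := by
    rcases Nat.lt_or_ge t n with hlt | hge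
    · have hn0 : 0 < n := by omega
      set W₀ : RowMLS.Tower M A t :=
        ⟨T₀, 0, fun _ => ⟨0, hn0⟩, fun _ => Finset.univ, hT₀, rfl, rfl,
          fun i h1 h2 => ((Nat.not_succ_le_zero 0) (h1.trans h2)).elim,
          fun i _ => Finset.subset_univ _,
          fun i h1 h2 => ((Nat.not_succ_le_zero 0) (h1.trans h2)).elim,
          fun i j h1 h2 _ _ _ => ((Nat.not_succ_le_zero 0) (h1.trans h2)).elim,
          fun i h1 h2 => ((Nat.not_succ_le_zero 0) (h1.trans h2)).elim⟩ with hW₀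
      exact RowMLS.main_aux hinj' hrows hmax ((n+2)^(n+2)) W₀ (Nat.sub_le _ _)
    · have h0 : n - t = 0 := by omega
      rw [h0]
      simp
  refine ⟨T₀, hT₀.1, hT₀.2.1, hT₀.2.2, ?_⟩
  have hs2 : ((n - t : ℕ) : ℝ) ≤ Real.sqrt n := by
    rw [Real.le_sqrt (by positivity) (by positivity)]
    have hsq : ((n-t) * (n-t) : ℕ) ≤ n := by omega
    have h2 : (((n-t) * (n-t) : ℕ) : ℝ) ≤ ((n : ℕ) : ℝ) := Nat.cast_le.mpr hsq
    push_cast at h2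
    nlinarith [h2]
  have hts : ((t : ℕ) : ℝ) = (n : ℝ) - ((n - t : ℕ) : ℝ) := by
    have : t + (n - t) = n := by omega
    have hc := congrArg (fun m : ℕ => (m : ℝ)) this
    push_cast at hc
    linarith
  rw [hts]
  linarith [hs2]
end
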